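/- Let F be a finite field, n, m, s, t, G ∈ ℕ with G ≤ t, and let P : F^n → F^n and Q : F^m → F^m be invertible F-linear maps. Suppose v₁, …, v_s ∈ F^n are linearly independent with P(v_i) = α_i v_i for scalars α_i ∈ F, w₁, …, w_t ∈ F^m are linearly independent with Q(w_k) = β_k w_k for scalars β_k ∈ F, and β₁, …, β_G are pairwise distinct. Then the dimension of Fix(P,Q) is at most n²m − s²(G−1). -/

import Mathlib

open TensorProduct

/-- The subspace `Fix(P,Q)` of bilinear maps `φ : F^n × F^n → F^m` (presented as linear maps
on the tensor square, which identifies bilinear maps with linear maps) satisfying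
`φ(P v₁, P v₂) = Q (φ v₁ v₂)` for all `v₁, v₂`. -/
def fixSubmodule {F : Type*} [Field F] {n m : ℕ}
    (P : (Fin n → F) ≃ₗ[F] (Fin n → F)) (Q : (Fin m → F) ≃ₗ[F] (Fin m → F)) :
    Submodule F ((Fin n → F) ⊗[F] (Fin n → F) →ₗ[F] (Fin m → F)) where
  carrier := {φ | ∀ v₁ v₂ : Fin n → F, φ (P v₁ ⊗ₜ[F] P v₂) = Q (φ (v₁ ⊗ₜ[F] v₂))}
  add_mem' := by
    intro a b ha hb v₁ v₂
    simp [ha v₁ v₂, hb v₁ v₂]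
  zero_mem' := by intro v₁ v₂; simp
  smul_mem' := by
    intro c a ha v₁ v₂
    simp [ha v₁ v₂]

/-!
Let `ℓ_k` be eigenvectors of the dual map `Qᵀ` for the distinct eigenvalues `β_k`, `k < G`;
they are linearly independent. For `φ ∈ Fix(P,Q)` we get
`α_i α_j ℓ_k(φ(v_i ⊗ v_j)) = β_k ℓ_k(φ(v_i ⊗ v_j))`, so `ℓ_k(φ(v_i ⊗ v_j)) = 0` unless
`β_k = α_i α_j`, which for each pair `(i, j)` happens for at most one `k`. Since the `v_i ⊗ v_j`
and the `ℓ_k` are linearly independent, the functionals `φ ↦ ℓ_k(φ(v_i ⊗ v_j))` are linearly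
independent, so `Fix(P,Q)` lies in the common kernel of at least `s²G - s²` independent
functionals.
-/

open Module Finset

namespace Module.End

variable {K V : Type*} [Field K] [AddCommGroup V] [Module K V] [FiniteDimensional K V]

lemma HasEigenvalue.dualMap {f : End K V} {μ : K} (h : f.HasEigenvalue μ) :
    HasEigenvalue (f.dualMap : End K (Dual K V)) μ := by
  have hdual : (f.dualMap : End K (Dual K V)) - μ • 1 = (f - μ • 1).dualMap := by
    ext ℓ y; simp
  rw [hasEigenvalue_iff, eigenspace_def, hdual, Ne, LinearMap.ker_eq_bot,
    LinearMap.dualMap_injective_iff, ← LinearMap.injective_iff_surjective,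
    ← LinearMap.ker_eq_bot, ← eigenspace_def]
  exact h

end Module.End

section

variable {K V W ι κ : Type*} [Field K] [AddCommGroup V] [Module K V] [AddCommGroup W] [Module K W]

lemma LinearIndependent.surjective_pi_dual [Finite κ] {ℓ : κ → Dual K V}
    (hℓ : LinearIndependent K ℓ) : Function.Surjective (LinearMap.pi ℓ) := by
  have := Fintype.ofFinite κ
  rw [← LinearMap.dualMap_injective_iff, ← LinearMap.ker_eq_bot, LinearMap.ker_eq_bot']
  intro g hg
  set c := (piEquiv κ K K).symm g
  have hgc : g = piEquiv κ K K c := by simp [c]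
  have hsum : ∑ k, c k • ℓ k = 0 := by
    ext y
    simpa [hgc, piEquiv_apply_apply, mul_comm] using LinearMap.congr_fun hg y
  rw [hgc, show c = 0 from funext (Fintype.linearIndependent_iff.mp hℓ c hsum), map_zero]

lemma LinearIndependent.exists_linearMap_apply_eq {x : ι → V} (hx : LinearIndependent K x)
    (u : ι → W) :
    ∃ φ : V →ₗ[K] W, ∀ i, φ (x i) = u i := by
  obtain ⟨g, hg⟩ := (Finsupp.linearCombination K x).exists_leftInverse_of_injective
    (LinearMap.ker_eq_bot.mpr hx)
  refine ⟨Finsupp.linearCombination K u ∘ₗ g, fun i => ?_⟩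
  have hgx : g (x i) = Finsupp.single i 1 := by
    simpa using LinearMap.congr_fun hg (Finsupp.single i 1)
  simp [hgx]

def evalPairing (x : ι → V) (ℓ : κ → Dual K W) : (V →ₗ[K] W) →ₗ[K] (ι × κ → K) :=
  LinearMap.pi fun p => ℓ p.2 ∘ₗ LinearMap.applyₗ (x p.1)

@[simp]
lemma evalPairing_apply (x : ι → V) (ℓ : κ → Dual K W) (φ : V →ₗ[K] W) (p : ι × κ) :
    evalPairing x ℓ φ p = ℓ p.2 (φ (x p.1)) :=
  rfl

lemma evalPairing_surjective [Finite κ] {x : ι → V} {ℓ : κ → Dual K W}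
    (hx : LinearIndependent K x) (hℓ : LinearIndependent K ℓ) :
    Function.Surjective (evalPairing x ℓ) := by
  intro g
  choose u hu using fun i => hℓ.surjective_pi_dual fun k => g (i, k)
  obtain ⟨φ, hφ⟩ := hx.exists_linearMap_apply_eq u
  exact ⟨φ, funext fun p => by simpa [hφ] using congrFun (hu p.1) p.2⟩

end

lemma finrank_add_card_le_of_surjective {K M ι : Type*} [Field K] [AddCommGroup M] [Module K M]
    [FiniteDimensional K M] {A : M →ₗ[K] (ι → K)} (hA : Function.Surjective A)
    {S : Submodule K M} {s : Finset ι} (hS : ∀ φ ∈ S, ∀ i ∈ s, A φ i = 0) :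
    finrank K S + #s ≤ finrank K M := by
  set A' := LinearMap.funLeft K K ((↑) : s → ι) ∘ₗ A
  have hA' : Function.Surjective A' :=
    (LinearMap.funLeft_surjective_of_injective K K _ Subtype.val_injective).comp hA
  have hSker : S ≤ LinearMap.ker A' := fun φ hφ => funext fun i => hS φ hφ i i.2
  calc finrank K S + #s ≤ finrank K (LinearMap.ker A') + finrank K (LinearMap.range A') := by
        rw [LinearMap.range_eq_top.mpr hA', finrank_top, finrank_fintype_fun_eq_card,
          Fintype.card_coe]
        gcongr
        exact Submodule.finrank_mono hSker
    _ = finrank K M := by rw [add_comm]; exact LinearMap.finrank_range_add_finrank_ker A'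

lemma Finset.card_filter_apply_snd_eq_le {ι κ K : Type*} [Fintype ι] [Fintype κ] [DecidableEq K]
    {b : κ → K} (hb : Function.Injective b) (c : ι → K) :
    #{p : ι × κ | b p.2 = c p.1} ≤ Fintype.card ι := by
  refine card_le_card_of_injOn Prod.fst (fun _ _ => mem_univ _) fun p hp q hq hpq => ?_
  simp only [coe_filter, Set.mem_ofPred_eq, mem_univ, true_and] at hp hq
  refine Prod.ext hpq (hb ?_)
  rw [hp, hq, hpq]

lemma apply_tmul_eq_zero_of_mem_fixSubmodule {F : Type*} [Field F] {n m : ℕ}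
    {P : (Fin n → F) ≃ₗ[F] (Fin n → F)} {Q : (Fin m → F) ≃ₗ[F] (Fin m → F)}
    {φ : (Fin n → F) ⊗[F] (Fin n → F) →ₗ[F] (Fin m → F)} (hφ : φ ∈ fixSubmodule P Q)
    {x y : Fin n → F} {a b : F} (hx : P x = a • x) (hy : P y = b • y)
    {ℓ : Dual F (Fin m → F)} {c : F} (hℓ : ∀ z, ℓ (Q z) = c * ℓ z) (hc : c ≠ a * b) :
    ℓ (φ (x ⊗ₜ y)) = 0 := by
  have h := congrArg ℓ (hφ x y)
  rw [hx, hy, smul_tmul_smul, map_smul, map_smul, hℓ, smul_eq_mul] at h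
  by_contra h0
  exact hc (mul_right_cancel₀ h0 h).symm

theorem stmt_16_general (F : Type) [Field F] (n m s t G : ℕ) (hG : G ≤ t)
    (P : (Fin n → F) ≃ₗ[F] (Fin n → F)) (Q : (Fin m → F) ≃ₗ[F] (Fin m → F))
    (v : Fin s → (Fin n → F)) (hv : LinearIndependent F v)
    (α : Fin s → F) (hα : ∀ i, P (v i) = α i • v i)
    (w : Fin t → (Fin m → F)) (hw : LinearIndependent F w)
    (β : Fin t → F) (hβ : ∀ k, Q (w k) = β k • w k)
    (hdist : ∀ k l : Fin t, k.1 < G → l.1 < G → k ≠ l → β k ≠ β l) :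
    (Module.finrank F (fixSubmodule P Q) : ℤ)
      ≤ (n : ℤ) ^ 2 * m - (s : ℤ) ^ 2 * ((G : ℤ) - 1) := by
  classical
  set b : Fin G → F := fun k => β (Fin.castLE hG k)
  have hb : Function.Injective b := fun k l hkl => by
    by_contra hne
    exact hdist _ _ k.2 l.2 (by simpa [Fin.ext_iff] using hne) hkl
  have hQ (k : Fin G) : End.HasEigenvalue (Q : End F (Fin m → F)) (b k) :=
    End.hasEigenvalue_of_hasEigenvector ⟨End.mem_eigenspace_iff.mpr (hβ _), hw.ne_zero _⟩
  choose ℓ hℓ using fun k => (hQ k).dualMap.exists_hasEigenvector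
  have hℓQ (k : Fin G) (z : Fin m → F) : ℓ k (Q z) = b k * ℓ k z := by
    simpa using LinearMap.congr_fun (hℓ k).apply_eq_smul z
  have hbound := finrank_add_card_le_of_surjective
    (evalPairing_surjective (hv.tmul_of_isDomain hv)
      (End.eigenvectors_linearIndependent' _ b hb ℓ hℓ))
    (S := fixSubmodule P Q) (s := {p | b p.2 ≠ α p.1.1 * α p.1.2})
    fun φ hφ p hp => apply_tmul_eq_zero_of_mem_fixSubmodule hφ (hα _) (hα _) (hℓQ _)
      (by simpa using hp)
  have hsplit := card_filter_add_card_filter_not (s := univ)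
    fun p : (Fin s × Fin s) × Fin G => b p.2 = α p.1.1 * α p.1.2
  have hfew := card_filter_apply_snd_eq_le hb fun p : Fin s × Fin s => α p.1 * α p.2
  simp only [finrank_linearMap, finrank_tensorProduct, finrank_fin_fun, card_univ,
    Fintype.card_prod, Fintype.card_fin] at hbound hsplit hfew
  zify at hbound hsplit hfew
  linarith

/-- if `P` has linearly independent eigenvectors `v₁, …, v_s` with eigenvalues
`α₁, …, α_s`, `Q` has linearly independent eigenvectors `w₁, …, w_t` with eigenvalues
`β₁, …, β_t`, and `β₁, …, β_G` are pairwise distinct (`G ≤ t`), then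
`dim Fix(P,Q) ≤ n²m − s²(G−1)`. -/
theorem stmt_16 (F : Type) [Field F] [Fintype F] (n m s t G : ℕ) (hG : G ≤ t)
    (P : (Fin n → F) ≃ₗ[F] (Fin n → F)) (Q : (Fin m → F) ≃ₗ[F] (Fin m → F))
    (v : Fin s → (Fin n → F)) (hv : LinearIndependent F v)
    (α : Fin s → F) (hα : ∀ i, P (v i) = α i • v i)
    (w : Fin t → (Fin m → F)) (hw : LinearIndependent F w)
    (β : Fin t → F) (hβ : ∀ k, Q (w k) = β k • w k)
    (hdist : ∀ k l : Fin t, k.1 < G → l.1 < G → k ≠ l → β k ≠ β l) :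
    (Module.finrank F (fixSubmodule P Q) : ℤ)
      ≤ (n : ℤ) ^ 2 * m - (s : ℤ) ^ 2 * ((G : ℤ) - 1) :=
  stmt_16_general F n m s t G hG P Q v hv α hα w hw β hβ hdist
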